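/- arXiv:2503.01500 — 3 statements merged into one kernel-verified Lean document; each statement's English description precedes it below -/
import Mathlib

section
/- For all integers q and r with 1 ≤ q ≤ r ≤ 2q: every finite connected simple graph G with ind-match(G) = 1, min-match(G) = q and match(G) = r has at least 2r vertices, and there exists a finite connected simple graph G with ind-match(G) = 1, min-match(G) = q, match(G) = r and exactly 2r vertices. (That is, the minimum number of vertices of such graphs is 2r.) -/
variable {V : Type*}

/-- A matching of `G`: a set of edges of `G` that are pairwise disjoint. -/
def IsMatchingSet (G : SimpleGraph V) (M : Set (Sym2 V)) : Prop :=
  (∀ e ∈ M, e ∈ G.edgeSet) ∧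
    ∀ e ∈ M, ∀ f ∈ M, e ≠ f → ∀ v : V, v ∈ e → v ∉ f

/-- A maximal matching of `G`: a matching `M` such that `M ∪ {e}` is not a matching
for every edge `e` of `G` not in `M`. -/
def IsMaximalMatchingSet (G : SimpleGraph V) (M : Set (Sym2 V)) : Prop :=
  IsMatchingSet G M ∧
    ∀ e ∈ G.edgeSet, e ∉ M → ¬ IsMatchingSet G (insert e M)

/-- An induced matching of `G`: a matching `M` such that no edge of `G` meets
two distinct edges of `M`. -/
def IsInducedMatchingSet (G : SimpleGraph V) (M : Set (Sym2 V)) : Prop :=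
  IsMatchingSet G M ∧
    ∀ e ∈ M, ∀ f ∈ M, e ≠ f → ∀ g ∈ G.edgeSet,
      ¬ ((∃ v : V, v ∈ g ∧ v ∈ e) ∧ (∃ v : V, v ∈ g ∧ v ∈ f))

/-- The matching number of `G`: the maximum size of a matching. -/
noncomputable def matchNum (G : SimpleGraph V) : ℕ :=
  sSup {n | ∃ M : Set (Sym2 V), IsMatchingSet G M ∧ M.ncard = n}

/-- The minimum matching number of `G`: the minimum size of a maximal matching. -/
noncomputable def minMatchNum (G : SimpleGraph V) : ℕ :=
  sInf {n | ∃ M : Set (Sym2 V), IsMaximalMatchingSet G M ∧ M.ncard = n}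

/-- The induced matching number of `G`: the maximum size of an induced matching. -/
noncomputable def indMatchNum (G : SimpleGraph V) : ℕ :=
  sSup {n | ∃ M : Set (Sym2 V), IsInducedMatchingSet G M ∧ M.ncard = n}

/-!
A matching with `r` edges covers `2r` vertices, which gives the lower bound. For the extremal
graph take `K_{2q}` and attach a pendant edge to `2r - 2q` of its vertices. The clique is a vertex
cover, so any two disjoint edges are joined by an edge between their clique endpoints, and
ind-match is `1`. A maximal matching leaves at most one clique vertex uncovered, so it has at
least `q` edges, and a perfect matching of the clique is maximal because it covers the vertex
cover. Finally the pendant edges together with a pairing of the remaining clique vertices form a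
perfect matching with `r` edges.
-/

open Set

section Matchings

variable {G : SimpleGraph V} {M : Set (Sym2 V)}

def edgeSupport (M : Set (Sym2 V)) : Set V := {v | ∃ e ∈ M, v ∈ e}

lemma edgeSupport_insert (e : Sym2 V) (M : Set (Sym2 V)) :
    edgeSupport (insert e M) = {v | v ∈ e} ∪ edgeSupport M := by
  ext v
  simp [edgeSupport]

lemma ncard_setOf_mem_of_mem_edgeSet {e : Sym2 V} (he : e ∈ G.edgeSet) :
    {v | v ∈ e}.ncard = 2 := by
  induction e with
  | h a b =>
    have hab : {v | v ∈ s(a, b)} = {a, b} := by ext; simp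
    rw [hab, ncard_pair (G.ne_of_adj he)]

lemma IsMatchingSet.mono {M' : Set (Sym2 V)} (hM : IsMatchingSet G M) (h : M' ⊆ M) :
    IsMatchingSet G M' :=
  ⟨fun e he => hM.1 e (h he), fun e he f hf => hM.2 e (h he) f (h hf)⟩

lemma IsMatchingSet.ncard_edgeSupport [Finite V] (hM : IsMatchingSet G M) :
    (edgeSupport M).ncard = 2 * M.ncard := by
  induction M, M.toFinite using Set.Finite.induction_on with
  | empty => simp [edgeSupport]
  | @insert e M heM hfin ih =>
    have hdisj : Disjoint {v | v ∈ e} (edgeSupport M) := by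
      rw [disjoint_left]
      rintro v hve ⟨f, hf, hvf⟩
      exact hM.2 e (mem_insert e M) f (mem_insert_of_mem e hf) (by rintro rfl; exact heM hf)
        v hve hvf
    rw [edgeSupport_insert, ncard_union_eq hdisj, ncard_insert_of_notMem heM,
      ncard_setOf_mem_of_mem_edgeSet (hM.1 e (mem_insert e M)),
      ih (hM.mono (subset_insert e M))]
    ring

lemma IsMatchingSet.two_mul_ncard_le [Finite V] (hM : IsMatchingSet G M) :
    2 * M.ncard ≤ Nat.card V :=
  hM.ncard_edgeSupport ▸ ncard_le_card _

lemma two_mul_matchNum_le [Finite V] (G : SimpleGraph V) : 2 * matchNum G ≤ Nat.card V := by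
  have : matchNum G ≤ Nat.card V / 2 := by
    refine csSup_le' ?_
    rintro _ ⟨M, hM, rfl⟩
    have := hM.two_mul_ncard_le
    omega
  omega

lemma IsMatchingSet.insert {e : Sym2 V} (hM : IsMatchingSet G M) (he : e ∈ G.edgeSet)
    (hfree : ∀ v ∈ e, v ∉ edgeSupport M) : IsMatchingSet G (insert e M) := by
  refine ⟨?_, ?_⟩
  · rintro f (rfl | hf)
    exacts [he, hM.1 f hf]
  · rintro f (rfl | hf) g (rfl | hg) hfg v hvf hvg
    · exact hfg rfl
    · exact hfree v hvf ⟨g, hg, hvg⟩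
    · exact hfree v hvg ⟨f, hf, hvf⟩
    · exact hM.2 f hf g hg hfg v hvf hvg

lemma IsMatchingSet.isMaximal_of_forall_mem_edgeSupport (hM : IsMatchingSet G M)
    (hcov : ∀ e ∈ G.edgeSet, ∃ v ∈ e, v ∈ edgeSupport M) : IsMaximalMatchingSet G M := by
  refine ⟨hM, fun e he heM hins => ?_⟩
  obtain ⟨v, hve, f, hf, hvf⟩ := hcov e he
  exact hins.2 e (mem_insert e M) f (mem_insert_of_mem e hf) (by rintro rfl; exact heM hf)
    v hve hvf

lemma IsMaximalMatchingSet.subsingleton_diff_edgeSupport {C : Set V}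
    (hM : IsMaximalMatchingSet G M) (hC : G.IsClique C) : (C \ edgeSupport M).Subsingleton := by
  rintro u ⟨huC, hu⟩ v ⟨hvC, hv⟩
  by_contra huv
  have hadj : G.Adj u v := hC huC hvC huv
  have heM : s(u, v) ∉ M := fun h => hu ⟨_, h, Sym2.mem_mk_left u v⟩
  refine hM.2 s(u, v) hadj heM (hM.1.insert hadj ?_)
  intro w hw
  rcases Sym2.mem_iff.1 hw with rfl | rfl
  exacts [hu, hv]

lemma IsMaximalMatchingSet.ncard_le_of_isClique [Finite V] {C : Set V}
    (hM : IsMaximalMatchingSet G M) (hC : G.IsClique C) : C.ncard ≤ 2 * M.ncard + 1 := by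
  have hfree : (C \ edgeSupport M).ncard ≤ 1 :=
    (ncard_le_one (toFinite _)).2 (hM.subsingleton_diff_edgeSupport hC)
  calc C.ncard ≤ (C \ edgeSupport M ∪ edgeSupport M).ncard :=
        ncard_le_ncard (subset_sdiff_union C _)
    _ ≤ (C \ edgeSupport M).ncard + (edgeSupport M).ncard := ncard_union_le _ _
    _ ≤ 2 * M.ncard + 1 := by rw [hM.1.ncard_edgeSupport]; omega

lemma IsInducedMatchingSet.subsingleton_of_isClique {C : Set V} (hM : IsInducedMatchingSet G M)
    (hC : G.IsClique C) (hcov : ∀ e ∈ G.edgeSet, ∃ v ∈ e, v ∈ C) : M.Subsingleton := by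
  intro e he f hf
  by_contra hef
  obtain ⟨u, hue, huC⟩ := hcov e (hM.1.1 e he)
  obtain ⟨v, hvf, hvC⟩ := hcov f (hM.1.1 f hf)
  have huv : u ≠ v := by
    rintro rfl
    exact hM.1.2 e he f hf hef u hue hvf
  exact hM.2 e he f hf hef s(u, v) (hC huC hvC huv)
    ⟨⟨u, Sym2.mem_mk_left u v, hue⟩, ⟨v, Sym2.mem_mk_right u v, hvf⟩⟩

lemma matchNum_eq_ncard_of_edgeSupport_eq_univ [Finite V] (hM : IsMatchingSet G M)
    (hsupp : edgeSupport M = univ) : matchNum G = M.ncard := by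
  refine IsGreatest.csSup_eq ⟨⟨M, hM, rfl⟩, ?_⟩
  rintro _ ⟨M', hM', rfl⟩
  have hcard := hM.ncard_edgeSupport
  rw [hsupp, ncard_univ] at hcard
  have := hM'.two_mul_ncard_le
  omega

lemma minMatchNum_eq_ncard_of_isClique [Finite V] {C : Set V} (hC : G.IsClique C)
    (hcov : ∀ e ∈ G.edgeSet, ∃ v ∈ e, v ∈ C) (hM : IsMatchingSet G M)
    (hsupp : edgeSupport M = C) : minMatchNum G = M.ncard := by
  subst hsupp
  refine IsLeast.csInf_eq ⟨⟨M, hM.isMaximal_of_forall_mem_edgeSupport hcov, rfl⟩, ?_⟩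
  rintro _ ⟨M', hM', rfl⟩
  have := hM'.ncard_le_of_isClique hC
  have := hM.ncard_edgeSupport
  omega

lemma indMatchNum_eq_one_of_isClique {C : Set V} {e : Sym2 V} (hC : G.IsClique C)
    (hcov : ∀ e ∈ G.edgeSet, ∃ v ∈ e, v ∈ C) (he : e ∈ G.edgeSet) :
    indMatchNum G = 1 := by
  have hsingle : IsInducedMatchingSet G {e} := by
    refine ⟨⟨?_, ?_⟩, ?_⟩
    · rintro _ rfl; exact he
    all_goals rintro _ rfl _ rfl hne; exact absurd rfl hne
  refine IsGreatest.csSup_eq ⟨⟨{e}, hsingle, ncard_singleton e⟩, ?_⟩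
  rintro _ ⟨M, hM, rfl⟩
  have hsub := hM.subsingleton_of_isClique hC hcov
  exact (ncard_le_one hsub.finite).2 hsub

end Matchings

section PairEdges

variable (σ : V → V) (S : Set V)

def pairEdges : Set (Sym2 V) := (fun v => s(v, σ v)) '' S

variable {σ S}

lemma edgeSupport_pairEdges (hS : MapsTo σ S S) : edgeSupport (pairEdges σ S) = S := by
  ext v
  constructor
  · rintro ⟨_, ⟨a, ha, rfl⟩, hv⟩
    rcases Sym2.mem_iff.1 hv with rfl | rfl
    exacts [ha, hS ha]
  · exact fun hv => ⟨_, mem_image_of_mem _ hv, Sym2.mem_mk_left v (σ v)⟩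

lemma pair_eq_of_mem_pair {a w : V} (ha : σ (σ a) = a) (hw : w ∈ s(a, σ a)) :
    s(a, σ a) = s(w, σ w) := by
  rcases Sym2.mem_iff.1 hw with rfl | rfl
  · rfl
  · rw [ha, Sym2.eq_swap]

lemma isMatchingSet_pairEdges {G : SimpleGraph V} (hσ : ∀ v ∈ S, σ (σ v) = v)
    (hadj : ∀ v ∈ S, G.Adj v (σ v)) : IsMatchingSet G (pairEdges σ S) := by
  refine ⟨?_, ?_⟩
  · rintro _ ⟨v, hv, rfl⟩
    exact hadj v hv
  · rintro _ ⟨a, ha, rfl⟩ _ ⟨b, hb, rfl⟩ hab w hwa hwb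
    exact hab ((pair_eq_of_mem_pair (hσ a ha) hwa).trans (pair_eq_of_mem_pair (hσ b hb) hwb).symm)

end PairEdges

lemma SimpleGraph.connected_of_isClique {G : SimpleGraph V} {C : Set V} (hC : G.IsClique C)
    (hne : C.Nonempty) (hdom : ∀ v ∉ C, ∃ c ∈ C, G.Adj v c) : G.Connected := by
  obtain ⟨c₀, hc₀⟩ := hne
  have hcore : ∀ c ∈ C, G.Reachable c c₀ := fun c hc => by
    rcases eq_or_ne c c₀ with rfl | hne
    exacts [SimpleGraph.Reachable.refl c, (hC hc hc₀ hne).reachable]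
  have hreach : ∀ v, G.Reachable v c₀ := fun v => by
    by_cases hv : v ∈ C
    · exact hcore v hv
    · obtain ⟨c, hc, hvc⟩ := hdom v hv
      exact hvc.reachable.trans (hcore c hc)
  exact (G.connected_iff).2 ⟨fun u v => (hreach u).trans (hreach v).symm, ⟨c₀⟩⟩

/-- For `q ≤ r ≤ 2q`: the complete graph on the `2q` vertices `v < 2q`, with a pendant vertex
`v + 2q` attached to each `v < 2r - 2q`. -/
def cliqueWithPendants (q r : ℕ) : SimpleGraph (Fin (2 * r)) :=
  SimpleGraph.fromRel fun u v => (u.val < 2 * q ∧ v.val < 2 * q) ∨ v.val = u.val + 2 * q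

namespace cliqueWithPendants

variable {q r : ℕ}

def core (q r : ℕ) : Set (Fin (2 * r)) := {v | v.val < 2 * q}

lemma adj_iff {u v : Fin (2 * r)} : (cliqueWithPendants q r).Adj u v ↔
    u ≠ v ∧ ((u.val < 2 * q ∧ v.val < 2 * q) ∨ v.val = u.val + 2 * q ∨
      u.val = v.val + 2 * q) := by
  rw [cliqueWithPendants, SimpleGraph.fromRel_adj]
  tauto

lemma ncard_core (hqr : q ≤ r) : (core q r).ncard = 2 * q := by
  rw [core, ← Fin.range_castLE (by omega : 2 * q ≤ 2 * r),
    ncard_range_of_injective (Fin.castLE_injective _), Nat.card_eq_fintype_card, Fintype.card_fin]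

lemma isClique_core : (cliqueWithPendants q r).IsClique (core q r) :=
  fun _ hu _ hv huv => adj_iff.2 ⟨huv, Or.inl ⟨hu, hv⟩⟩

lemma exists_mem_core (hr2q : r ≤ 2 * q) {e : Sym2 (Fin (2 * r))}
    (he : e ∈ (cliqueWithPendants q r).edgeSet) : ∃ v ∈ e, v ∈ core q r := by
  induction e with
  | h a b =>
    rw [SimpleGraph.mem_edgeSet, adj_iff] at he
    have := a.isLt
    have := b.isLt
    rcases he.2 with ⟨ha, -⟩ | hb | ha
    · exact ⟨a, Sym2.mem_mk_left a b, ha⟩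
    · exact ⟨a, Sym2.mem_mk_left a b, show a.val < 2 * q by omega⟩
    · exact ⟨b, Sym2.mem_mk_right a b, show b.val < 2 * q by omega⟩

lemma connected (hq : 1 ≤ q) (hqr : q ≤ r) (hr2q : r ≤ 2 * q) :
    (cliqueWithPendants q r).Connected := by
  refine SimpleGraph.connected_of_isClique isClique_core
    ⟨⟨0, by omega⟩, show 0 < 2 * q by omega⟩ fun v hv => ?_
  have hv : 2 * q ≤ v.val := not_lt.1 hv
  have := v.isLt
  exact ⟨⟨v.val - 2 * q, by omega⟩, show v.val - 2 * q < 2 * q by omega,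
    adj_iff.2 ⟨fun h => by simp [Fin.ext_iff] at h; omega, Or.inr (Or.inr (by simp; omega))⟩⟩

def swapParity (v : Fin (2 * r)) : Fin (2 * r) :=
  ⟨if v.val % 2 = 0 then v.val + 1 else v.val - 1, by have := v.isLt; split_ifs <;> omega⟩

/-- Matches each `v < 2r - 2q` with its pendant `v + 2q`; the remaining core vertices are
paired by `swapParity`. -/
def perfectPartner (q r : ℕ) (v : Fin (2 * r)) : Fin (2 * r) :=
  ⟨if v.val < 2 * (r - q) then v.val + 2 * q else if 2 * q ≤ v.val then v.val - 2 * q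
    else (swapParity v).val, by have := v.isLt; simp only [swapParity]; split_ifs <;> omega⟩

lemma matchNum_eq (hqr : q ≤ r) (hr2q : r ≤ 2 * q) : matchNum (cliqueWithPendants q r) = r := by
  have hσ : ∀ v ∈ univ, perfectPartner q r (perfectPartner q r v) = v := by
    intro v _
    have := v.isLt
    simp only [perfectPartner, swapParity, Fin.ext_iff]
    split_ifs <;> omega
  have hadj : ∀ v ∈ univ, (cliqueWithPendants q r).Adj v (perfectPartner q r v) := by
    intro v _
    have := v.isLt
    rw [adj_iff]
    simp only [perfectPartner, swapParity, ne_eq, Fin.ext_iff]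
    split_ifs <;> omega
  have hM := isMatchingSet_pairEdges hσ hadj
  have hsupp := edgeSupport_pairEdges (mapsTo_univ (perfectPartner q r) univ)
  have hcard := hM.ncard_edgeSupport
  rw [matchNum_eq_ncard_of_edgeSupport_eq_univ hM hsupp]
  rw [hsupp, ncard_univ, Nat.card_eq_fintype_card, Fintype.card_fin] at hcard
  omega

lemma minMatchNum_eq (hqr : q ≤ r) (hr2q : r ≤ 2 * q) :
    minMatchNum (cliqueWithPendants q r) = q := by
  have hmaps : MapsTo swapParity (core q r) (core q r) := by
    intro v hv
    change v.val < 2 * q at hv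
    change (swapParity v).val < 2 * q
    simp only [swapParity]
    split_ifs <;> omega
  have hσ : ∀ v ∈ core q r, swapParity (swapParity v) = v := by
    intro v _
    simp only [swapParity, Fin.ext_iff]
    split_ifs <;> omega
  have hadj : ∀ v ∈ core q r, (cliqueWithPendants q r).Adj v (swapParity v) := fun v hv =>
    isClique_core hv (hmaps hv) (by simp only [swapParity, ne_eq, Fin.ext_iff]; split_ifs <;> omega)
  have hM := isMatchingSet_pairEdges hσ hadj
  have hsupp := edgeSupport_pairEdges hmaps
  have hcard := hM.ncard_edgeSupport
  rw [hsupp, ncard_core hqr] at hcard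
  rw [minMatchNum_eq_ncard_of_isClique isClique_core (fun _ => exists_mem_core hr2q) hM hsupp]
  omega

lemma indMatchNum_eq (hq : 1 ≤ q) (hqr : q ≤ r) (hr2q : r ≤ 2 * q) :
    indMatchNum (cliqueWithPendants q r) = 1 :=
  indMatchNum_eq_one_of_isClique isClique_core (fun _ => exists_mem_core hr2q)
    (e := s(⟨0, by omega⟩, ⟨1, by omega⟩)) (isClique_core (by simp [core]; omega)
      (by simp [core]; omega) (by simp [Fin.ext_iff]))

end cliqueWithPendants

theorem stmt_0 (q r : ℕ) (hq : 1 ≤ q) (hqr : q ≤ r) (hr2q : r ≤ 2 * q) :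
    (∀ (V : Type) [Fintype V] (G : SimpleGraph V), G.Connected →
      indMatchNum G = 1 → minMatchNum G = q → matchNum G = r →
      2 * r ≤ Fintype.card V) ∧
    (∃ G : SimpleGraph (Fin (2 * r)), G.Connected ∧
      indMatchNum G = 1 ∧ minMatchNum G = q ∧ matchNum G = r) := by
  refine ⟨fun V _ G _ _ _ hr => ?_, ⟨cliqueWithPendants q r, ?_⟩⟩
  · rw [← hr, ← Nat.card_eq_fintype_card]
    exact two_mul_matchNum_le G
  · exact ⟨cliqueWithPendants.connected hq hqr hr2q,
      cliqueWithPendants.indMatchNum_eq hq hqr hr2q, cliqueWithPendants.minMatchNum_eq hqr hr2q,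
      cliqueWithPendants.matchNum_eq hqr hr2q⟩
end

section
/- For all integers p, q and r with 2 ≤ p ≤ q < r ≤ 2q: every finite connected simple graph G with ind-match(G) = p, min-match(G) = q and match(G) = r has at least 2r vertices, and there exists a finite connected simple graph G with ind-match(G) = p, min-match(G) = q, match(G) = r and exactly 2r vertices. (That is, the minimum number of vertices of such graphs is 2r.) -/
variable {V : Type*}

/-!
A matching with `r` edges covers `2r` vertices, which gives the lower bound.

For the construction, take a clique on `2u` vertices with `2t ≤ 2u` pendant vertices, `a` paths
`P₄` hanging from the clique and `b` edges hanging from one pendant vertex. It has a perfect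
matching, of size `u + t + 2a + b`. A maximal matching leaves at most one clique vertex
uncovered, so it has `u` edges meeting the clique, and it covers each of the `a + b` vertices
adjacent to a leaf by an edge of its own: at least `u + a + b` edges. Every edge meets one of
`1 + a + b` cliques, and an induced matching has at most one edge meeting each of them.
-/

open Finset

variable {W : Type*} {G : SimpleGraph V} {H : SimpleGraph W} {M : Set (Sym2 V)}

theorem isInducedMatchingSet_iff :
    IsInducedMatchingSet G M ↔
      IsMatchingSet G M ∧
        ∀ e ∈ M, ∀ f ∈ M, e ≠ f → ∀ x ∈ e, ∀ y ∈ f, ¬ G.Adj x y := by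
  refine and_congr_right fun hM => forall₂_congr fun e he => forall₂_congr fun f hf =>
    imp_congr_right fun hef =>
      ⟨fun h x hx y hy hxy => h s(x, y) hxy ⟨⟨x, by simp, hx⟩, y, by simp, hy⟩, ?_⟩
  rintro h g hg ⟨⟨x, hxg, hx⟩, y, hyg, hy⟩
  obtain rfl | hxy := eq_or_ne x y
  · exact hM.2 e he f hf hef x hx hy
  · rw [(Sym2.mem_and_mem_iff hxy).mp ⟨hxg, hyg⟩] at hg
    exact h x hx y hy hg

theorem isMaximalMatchingSet_iff :
    IsMaximalMatchingSet G M ↔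
      IsMatchingSet G M ∧ ∀ x y, G.Adj x y → ∃ e ∈ M, x ∈ e ∨ y ∈ e := by
  refine and_congr_right fun hM => ⟨fun h x y hxy => ?_, fun h e he heM hins => ?_⟩
  · by_contra! hfree
    by_cases hxyM : s(x, y) ∈ M
    · exact (hfree _ hxyM).1 (Sym2.mem_mk_left x y)
    refine h s(x, y) hxy hxyM ⟨?_, ?_⟩
    · rintro e (rfl | he)
      exacts [hxy, hM.1 e he]
    · rintro e (rfl | he) f (rfl | hf) hef v hve hvf
      · exact hef rfl
      · rcases Sym2.mem_iff.mp hve with rfl | rfl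
        exacts [(hfree f hf).1 hvf, (hfree f hf).2 hvf]
      · rcases Sym2.mem_iff.mp hvf with rfl | rfl
        exacts [(hfree e he).1 hve, (hfree e he).2 hve]
      · exact hM.2 e he f hf hef v hve hvf
  · induction e using Sym2.ind with
    | _ x y =>
      obtain ⟨f, hf, hxy⟩ := h x y he
      have hne : s(x, y) ≠ f := fun h => heM (h ▸ hf)
      rcases hxy with hx | hy
      · exact hins.2 _ (Set.mem_insert _ _) f (Set.mem_insert_of_mem _ hf) hne x (by simp) hx
      · exact hins.2 _ (Set.mem_insert _ _) f (Set.mem_insert_of_mem _ hf) hne y (by simp) hy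

theorem IsMatchingSet.map_iso (φ : G ≃g H) (hM : IsMatchingSet G M) :
    IsMatchingSet H (Sym2.map φ '' M) := by
  refine ⟨?_, ?_⟩
  · rintro _ ⟨e, he, rfl⟩
    exact φ.map_mem_edgeSet_iff.mpr (hM.1 e he)
  · rintro _ ⟨e, he, rfl⟩ _ ⟨f, hf, rfl⟩ hef _ hve hvf
    obtain ⟨x, hx, rfl⟩ := Sym2.mem_map.mp hve
    obtain ⟨y, hy, hxy⟩ := Sym2.mem_map.mp hvf
    rw [φ.injective hxy] at hy
    exact hM.2 e he f hf (fun h => hef (h ▸ rfl)) x hx hy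

theorem IsInducedMatchingSet.map_iso (φ : G ≃g H) (hM : IsInducedMatchingSet G M) :
    IsInducedMatchingSet H (Sym2.map φ '' M) := by
  rw [isInducedMatchingSet_iff] at hM ⊢
  refine ⟨hM.1.map_iso φ, ?_⟩
  rintro _ ⟨e, he, rfl⟩ _ ⟨f, hf, rfl⟩ hef _ hxe _ hyf
  obtain ⟨x, hx, rfl⟩ := Sym2.mem_map.mp hxe
  obtain ⟨y, hy, rfl⟩ := Sym2.mem_map.mp hyf
  rw [φ.map_adj_iff]
  exact hM.2 e he f hf (fun h => hef (h ▸ rfl)) x hx y hy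

theorem IsMaximalMatchingSet.map_iso (φ : G ≃g H) (hM : IsMaximalMatchingSet G M) :
    IsMaximalMatchingSet H (Sym2.map φ '' M) := by
  rw [isMaximalMatchingSet_iff] at hM ⊢
  refine ⟨hM.1.map_iso φ, fun x y hxy => ?_⟩
  obtain ⟨e, he, hxy'⟩ := hM.2 (φ.symm x) (φ.symm y) (φ.symm.map_adj_iff.mpr hxy)
  refine ⟨Sym2.map φ e, Set.mem_image_of_mem _ he, ?_⟩
  simpa only [Sym2.mem_map, ← φ.eq_symm_apply, exists_eq_right] using hxy'

theorem setOf_ncard_subset_of_iso (φ : G ≃g H) {P : Set (Sym2 V) → Prop}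
    {Q : Set (Sym2 W) → Prop} (h : ∀ N, P N → Q (Sym2.map φ '' N)) :
    {n | ∃ N, P N ∧ N.ncard = n} ⊆ {n | ∃ N, Q N ∧ N.ncard = n} := by
  rintro _ ⟨N, hN, rfl⟩
  exact ⟨_, h N hN, Set.ncard_image_of_injective N (Sym2.map.injective φ.injective)⟩

theorem matchNum_congr (φ : G ≃g H) : matchNum G = matchNum H :=
  congrArg sSup <| (setOf_ncard_subset_of_iso φ fun _ h => h.map_iso φ).antisymm
    (setOf_ncard_subset_of_iso φ.symm fun _ h => h.map_iso φ.symm)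

theorem indMatchNum_congr (φ : G ≃g H) : indMatchNum G = indMatchNum H :=
  congrArg sSup <| (setOf_ncard_subset_of_iso φ fun _ h => h.map_iso φ).antisymm
    (setOf_ncard_subset_of_iso φ.symm fun _ h => h.map_iso φ.symm)

theorem minMatchNum_congr (φ : G ≃g H) : minMatchNum G = minMatchNum H :=
  congrArg sInf <| (setOf_ncard_subset_of_iso φ fun _ h => h.map_iso φ).antisymm
    (setOf_ncard_subset_of_iso φ.symm fun _ h => h.map_iso φ.symm)

theorem card_le_mul_ncard_of_forall_exists_mem [DecidableEq V] {S : Finset V}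
    {E : Set (Sym2 V)} {k : ℕ} (hE : E.Finite) (hS : ∀ v ∈ S, ∃ e ∈ E, v ∈ e)
    (hk : ∀ e ∈ E, #{v ∈ S | v ∈ e} ≤ k) : #S ≤ k * E.ncard := by
  have hcover : S ⊆ hE.toFinset.biUnion fun e => {v ∈ S | v ∈ e} := fun v hv => by
    obtain ⟨e, he, hve⟩ := hS v hv
    exact mem_biUnion.mpr ⟨e, hE.mem_toFinset.mpr he, mem_filter.mpr ⟨hv, hve⟩⟩
  calc #S ≤ ∑ e ∈ hE.toFinset, #{v ∈ S | v ∈ e} :=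
        (card_le_card hcover).trans card_biUnion_le
    _ ≤ ∑ _e ∈ hE.toFinset, k := sum_le_sum fun e he => hk e (hE.mem_toFinset.mp he)
    _ = k * E.ncard := by rw [sum_const, smul_eq_mul, mul_comm, Set.ncard_eq_toFinset_card E hE]

theorem IsMatchingSet.two_mul_ncard_le_card [Fintype V] (hM : IsMatchingSet G M) :
    2 * M.ncard ≤ Fintype.card V := by
  classical
  have hfin : M.Finite := Set.toFinite M
  have hdisj : (hfin.toFinset : Set (Sym2 V)).PairwiseDisjoint Sym2.toFinset :=
    fun e he f hf hef => Finset.disjoint_left.mpr fun v hve hvf =>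
      hM.2 e (hfin.mem_toFinset.mp he) f (hfin.mem_toFinset.mp hf) hef v
        (Sym2.mem_toFinset.mp hve) (Sym2.mem_toFinset.mp hvf)
  calc 2 * M.ncard = ∑ e ∈ hfin.toFinset, #e.toFinset := by
        rw [Set.ncard_eq_toFinset_card M hfin, mul_comm, ← smul_eq_mul, ← sum_const]
        refine sum_congr rfl fun e he => (Sym2.card_toFinset_of_not_isDiag e ?_).symm
        exact G.not_isDiag_of_mem_edgeSet (hM.1 e (hfin.mem_toFinset.mp he))
    _ = #(hfin.toFinset.biUnion Sym2.toFinset) := (card_biUnion hdisj).symm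
    _ ≤ Fintype.card V := card_le_univ _

theorem exists_isMatchingSet_ncard_eq_matchNum [Fintype V] (G : SimpleGraph V) :
    ∃ M, IsMatchingSet G M ∧ M.ncard = matchNum G := by
  have hempty : IsMatchingSet G ∅ := ⟨by simp, by simp⟩
  refine Nat.sSup_mem (s := {n | ∃ M, IsMatchingSet G M ∧ M.ncard = n})
    ⟨0, ∅, hempty, Set.ncard_empty _⟩ ⟨Fintype.card V, ?_⟩
  rintro _ ⟨M, hM, rfl⟩
  have := hM.two_mul_ncard_le_card
  omega

theorem matchNum_eq_ncard (hM : IsMatchingSet G M)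
    (h : ∀ N, IsMatchingSet G N → N.ncard ≤ M.ncard) : matchNum G = M.ncard :=
  IsGreatest.csSup_eq ⟨⟨M, hM, rfl⟩, by rintro _ ⟨N, hN, rfl⟩; exact h N hN⟩

theorem indMatchNum_eq_ncard (hM : IsInducedMatchingSet G M)
    (h : ∀ N, IsInducedMatchingSet G N → N.ncard ≤ M.ncard) : indMatchNum G = M.ncard :=
  IsGreatest.csSup_eq ⟨⟨M, hM, rfl⟩, by rintro _ ⟨N, hN, rfl⟩; exact h N hN⟩

theorem minMatchNum_eq_ncard (hM : IsMaximalMatchingSet G M)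
    (h : ∀ N, IsMaximalMatchingSet G N → M.ncard ≤ N.ncard) : minMatchNum G = M.ncard :=
  IsLeast.csInf_eq ⟨⟨M, hM, rfl⟩, by rintro _ ⟨N, hN, rfl⟩; exact h N hN⟩

theorem IsMaximalMatchingSet.exists_mem_of_adj (hM : IsMaximalMatchingSet G M) {x y : V}
    (hxy : G.Adj x y) : ∃ e ∈ M, x ∈ e ∨ y ∈ e :=
  (isMaximalMatchingSet_iff.mp hM).2 x y hxy

theorem IsMaximalMatchingSet.exists_mem_of_pendant (hM : IsMaximalMatchingSet G M) {v w : V}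
    (hvw : G.Adj v w) (hw : ∀ y, G.Adj w y → y = v) : ∃ e ∈ M, v ∈ e := by
  obtain ⟨e, he, hv | hwe⟩ := hM.exists_mem_of_adj hvw
  · exact ⟨e, he, hv⟩
  · refine ⟨e, he, ?_⟩
    induction e using Sym2.ind with
    | _ x y =>
      have hxy := hM.1.1 _ he
      rcases Sym2.mem_iff.mp hwe with rfl | rfl
      · exact hw y hxy ▸ Sym2.mem_mk_right _ _
      · exact hw x hxy.symm ▸ Sym2.mem_mk_left _ _

theorem IsMaximalMatchingSet.card_add_two_mul_card_le [Finite V]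
    (hM : IsMaximalMatchingSet G M) {K S : Finset V} (hK : G.IsClique (K : Set V))
    (hS : G.IsIndepSet (S : Set V)) (hSM : ∀ v ∈ S, ∃ e ∈ M, v ∈ e)
    (hKS : ∀ x ∈ K, ∀ y ∈ S, x ≠ y ∧ ¬ G.Adj x y) :
    #K + 2 * #S ≤ 2 * M.ncard + 1 := by
  classical
  have hfin : M.Finite := Set.toFinite M
  have hadj {e x y} (he : e ∈ M) (hx : x ∈ e) (hy : y ∈ e) (hxy : x ≠ y) : G.Adj x y :=
    G.adj_iff_exists_edge.mpr ⟨hxy, e, hM.1.1 e he, hx, hy⟩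
  set MK := {e ∈ M | ∃ v ∈ K, v ∈ e}
  set MS := {e ∈ M | ∃ v ∈ S, v ∈ e}
  -- All but at most one vertex of the clique is covered, and an edge covers at most two.
  have hMK : #K ≤ 2 * MK.ncard + 1 := by
    have huncovered : #{v ∈ K | ¬ ∃ e ∈ M, v ∈ e} ≤ 1 := by
      refine card_le_one.mpr fun x hx y hy => ?_
      simp only [mem_filter] at hx hy
      by_contra hxy
      obtain ⟨e, he, hxe | hye⟩ := hM.exists_mem_of_adj (hK hx.1 hy.1 hxy)
      exacts [hx.2 ⟨e, he, hxe⟩, hy.2 ⟨e, he, hye⟩]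
    have hcovered : #{v ∈ K | ∃ e ∈ M, v ∈ e} ≤ 2 * MK.ncard := by
      refine card_le_mul_ncard_of_forall_exists_mem (hfin.subset (Set.sep_subset _ _))
        (fun v hv => ?_) fun e _ => ?_
      · obtain ⟨hvK, e, he, hve⟩ := mem_filter.mp hv
        exact ⟨e, ⟨he, v, hvK, hve⟩, hve⟩
      · refine (card_le_card fun v hv => Sym2.mem_toFinset.mpr (mem_filter.mp hv).2).trans ?_
        rw [Sym2.card_toFinset]
        split_ifs <;> norm_num
    have := card_filter_add_card_filter_not (s := K) (fun v => ∃ e ∈ M, v ∈ e)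
    omega
  -- The vertices of `S` are pairwise nonadjacent, so each is covered by its own edge.
  have hMS : #S ≤ 1 * MS.ncard := by
    refine card_le_mul_ncard_of_forall_exists_mem (hfin.subset (Set.sep_subset _ _))
      (fun v hv => ?_) fun e ⟨he, _⟩ => card_le_one.mpr fun x hx y hy => ?_
    · obtain ⟨e, he, hve⟩ := hSM v hv
      exact ⟨e, ⟨he, v, hv, hve⟩, hve⟩
    · simp only [mem_filter] at hx hy
      by_contra hxy
      exact hS hx.1 hy.1 hxy (hadj he hx.2 hy.2 hxy)
  have hdisj : Disjoint MK MS :=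
    Set.disjoint_left.mpr fun e ⟨he, x, hxK, hxe⟩ ⟨_, y, hyS, hye⟩ =>
      (hKS x hxK y hyS).2 (hadj he hxe hye (hKS x hxK y hyS).1)
  have hsub : MK.ncard + MS.ncard ≤ M.ncard := by
    rw [← Set.ncard_union_eq hdisj (hfin.subset (Set.sep_subset _ _))
      (hfin.subset (Set.sep_subset _ _))]
    exact Set.ncard_le_ncard (Set.union_subset (Set.sep_subset _ _) (Set.sep_subset _ _)) hfin
  omega

theorem IsInducedMatchingSet.ncard_le_of_isClique_cover {ι : Type*} [Finite ι]
    (hM : IsInducedMatchingSet G M) (Z : ι → Set V) (hZ : ∀ i, G.IsClique (Z i))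
    (hcover : ∀ x y, G.Adj x y → ∃ i, x ∈ Z i ∨ y ∈ Z i) : M.ncard ≤ Nat.card ι := by
  rw [isInducedMatchingSet_iff] at hM
  have hmeet : ∀ e ∈ M, ∃ i, ∃ v ∈ Z i, v ∈ e := fun e he => by
    induction e using Sym2.ind with
    | _ x y =>
      obtain ⟨i, hx | hy⟩ := hcover x y (hM.1.1 _ he)
      exacts [⟨i, x, hx, Sym2.mem_mk_left x y⟩, ⟨i, y, hy, Sym2.mem_mk_right x y⟩]
  choose cliqueOf v hvZ hve using hmeet
  rw [← Nat.card_coe_set_eq]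
  refine Nat.card_le_card_of_injective (fun e : M => cliqueOf e e.2)
    fun ⟨e, he⟩ ⟨f, hf⟩ hef => ?_
  simp only at hef
  by_contra hne
  replace hne : e ≠ f := fun h => hne (Subtype.ext h)
  by_cases hv : v e he = v f hf
  · exact hM.1.2 e he f hf hne _ (hve e he) (hv ▸ hve f hf)
  · exact hM.2 e he f hf hne _ (hve e he) _ (hve f hf) (hZ _ (hvZ e he) (hef ▸ hvZ f hf) hv)

section Range

variable {ι : Type*} {f : ι → Sym2 V}

theorem isMatchingSet_range (hf : ∀ i, f i ∈ G.edgeSet)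
    (hdisj : ∀ i j, ∀ v ∈ f i, v ∈ f j → i = j) : IsMatchingSet G (Set.range f) :=
  ⟨by rintro _ ⟨i, rfl⟩; exact hf i, by
    rintro _ ⟨i, rfl⟩ _ ⟨j, rfl⟩ hij v hvi hvj
    exact hij (congrArg f (hdisj i j v hvi hvj))⟩

theorem isInducedMatchingSet_range (hf : ∀ i, f i ∈ G.edgeSet)
    (hdisj : ∀ i j, ∀ v ∈ f i, v ∈ f j → i = j)
    (hsep : ∀ i j, ∀ x ∈ f i, ∀ y ∈ f j, G.Adj x y → i = j) :
    IsInducedMatchingSet G (Set.range f) := by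
  refine isInducedMatchingSet_iff.mpr ⟨isMatchingSet_range hf hdisj, ?_⟩
  rintro _ ⟨i, rfl⟩ _ ⟨j, rfl⟩ hij x hx y hy hxy
  exact hij (congrArg f (hsep i j x hx y hy hxy))

theorem isMaximalMatchingSet_range (hf : ∀ i, f i ∈ G.edgeSet)
    (hdisj : ∀ i j, ∀ v ∈ f i, v ∈ f j → i = j)
    (hcover : ∀ x y, G.Adj x y → ∃ i, x ∈ f i ∨ y ∈ f i) :
    IsMaximalMatchingSet G (Set.range f) := by
  refine isMaximalMatchingSet_iff.mpr ⟨isMatchingSet_range hf hdisj, fun x y hxy => ?_⟩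
  obtain ⟨i, hi⟩ := hcover x y hxy
  exact ⟨f i, ⟨i, rfl⟩, hi⟩

theorem ncard_range_of_forall_mem_imp_eq (hdisj : ∀ i j, ∀ v ∈ f i, v ∈ f j → i = j) :
    (Set.range f).ncard = Nat.card ι := by
  have hinj : Function.Injective f := fun i j hij =>
    hdisj i j _ (Sym2.out_fst_mem (f i)) (hij ▸ Sym2.out_fst_mem (f i))
  rw [← Set.image_univ, Set.ncard_image_of_injective _ hinj, Set.ncard_univ]

end Range

/-!
The witness graph: a clique on `c₀, …, c_{2u-1}`; a pendant vertex `w_j` at `c_j` for `j < 2t`;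
`a` paths `t_{x,0} t_{x,1} t_{x,2} t_{x,3}` hanging from `c₀` at `t_{x,0}`; and `b` edges
`g_{y,0} g_{y,1}` hanging from `w₀` at `g_{y,0}`.
-/
namespace WhiskeredClique

abbrev Vertex (u t a b : ℕ) : Type :=
  (Fin (2 * u) ⊕ Fin (2 * t)) ⊕ ((Fin a × Fin 4) ⊕ (Fin b × Fin 2))

variable {u t a b : ℕ}

def rel : Vertex u t a b → Vertex u t a b → Prop
  | .inl (.inl _), .inl (.inl _) => True
  | .inl (.inl i), .inl (.inr j) => (i : ℕ) = j
  | .inl (.inl i), .inr (.inl (_, k)) => (i : ℕ) = 0 ∧ (k : ℕ) = 0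
  | .inl (.inr j), .inr (.inr (_, k)) => (j : ℕ) = 0 ∧ (k : ℕ) = 0
  | .inr (.inl (x, k)), .inr (.inl (x', k')) => x = x' ∧ (k : ℕ) + 1 = k'
  | .inr (.inr (y, _)), .inr (.inr (y', _)) => y = y'
  | _, _ => False

variable (u t a b) in
def graph : SimpleGraph (Vertex u t a b) := SimpleGraph.fromRel rel

abbrev clique (i : Fin (2 * u)) : Vertex u t a b := .inl (.inl i)
abbrev whisker (j : Fin (2 * t)) : Vertex u t a b := .inl (.inr j)
abbrev tail (x : Fin a) (k : Fin 4) : Vertex u t a b := .inr (.inl (x, k))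
abbrev gadget (y : Fin b) (k : Fin 2) : Vertex u t a b := .inr (.inr (y, k))

theorem card_vertex : Fintype.card (Vertex u t a b) = 2 * u + 2 * t + 4 * a + 2 * b := by
  simp only [Fintype.card_sum, Fintype.card_prod, Fintype.card_fin]
  ring

theorem graph_connected (hu : 0 < u) (ht : 0 < t) (htu : t ≤ u) : (graph u t a b).Connected := by
  have hclique (i) : (graph u t a b).Reachable (clique i) (clique ⟨0, by omega⟩) := by
    by_cases hi : i = ⟨0, by omega⟩
    · rw [hi]
    · exact SimpleGraph.Adj.reachable (by simpa [graph, rel] using hi)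
  have hwhisker (j) : (graph u t a b).Reachable (whisker j) (clique ⟨0, by omega⟩) :=
    (SimpleGraph.Adj.reachable (v := clique ⟨j, by omega⟩) (by simp [graph, rel])).trans
      (hclique _)
  have htail (x k) : (graph u t a b).Reachable (tail x k) (clique ⟨0, by omega⟩) := by
    have hstep (k : Fin 3) : (graph u t a b).Adj (tail x k.succ) (tail x k.castSucc) := by
      simp [graph, rel, Fin.ext_iff]
    have h₀ : (graph u t a b).Reachable (tail x 0) (clique ⟨0, by omega⟩) :=
      SimpleGraph.Adj.reachable (by simp [graph, rel])
    fin_cases k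
    · exact h₀
    · exact (hstep 0).reachable.trans h₀
    · exact (hstep 1).reachable.trans ((hstep 0).reachable.trans h₀)
    · exact (hstep 2).reachable.trans ((hstep 1).reachable.trans ((hstep 0).reachable.trans h₀))
  have hgadget (y k) : (graph u t a b).Reachable (gadget y k) (clique ⟨0, by omega⟩) := by
    have h₀ : (graph u t a b).Reachable (gadget y 0) (clique ⟨0, by omega⟩) :=
      (SimpleGraph.Adj.reachable (v := whisker ⟨0, by omega⟩) (by simp [graph, rel])).trans
        (hwhisker _)
    fin_cases k
    · exact h₀
    · exact (SimpleGraph.Adj.reachable (v := gadget y 0) (by simp [graph, rel])).trans h₀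
  refine (SimpleGraph.connected_iff_exists_forall_reachable _).mpr
    ⟨clique ⟨0, by omega⟩, ?_⟩
  rintro ((i | j) | (⟨x, k⟩ | ⟨y, k⟩))
  exacts [(hclique i).symm, (hwhisker j).symm, (htail x k).symm, (hgadget y k).symm]

def perfectEdge (htu : t ≤ u) :
    Fin (2 * t) ⊕ Fin (u - t) ⊕ (Fin a × Fin 2) ⊕ Fin b → Sym2 (Vertex u t a b)
  | .inl j => s(clique (j.castLE (by omega)), whisker j)
  | .inr (.inl i) =>
    s(clique ⟨2 * t + 2 * i, by omega⟩, clique ⟨2 * t + 2 * i + 1, by omega⟩)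
  | .inr (.inr (.inl (x, m))) => s(tail x ⟨2 * m, by omega⟩, tail x ⟨2 * m + 1, by omega⟩)
  | .inr (.inr (.inr y)) => s(gadget y 0, gadget y 1)

theorem perfectEdge_mem_edgeSet (htu : t ≤ u) (i) :
    perfectEdge (a := a) (b := b) htu i ∈ (graph u t a b).edgeSet := by
  rcases i with j | i | ⟨x, m⟩ | y <;> simp [perfectEdge, graph, rel, Fin.ext_iff]

theorem eq_of_mem_perfectEdge (htu : t ≤ u) :
    ∀ i j, ∀ v ∈ perfectEdge (a := a) (b := b) htu i, v ∈ perfectEdge htu j → i = j := by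
  rintro (i | i | ⟨x, m⟩ | y) (j | j | ⟨x', m'⟩ | y') v hi hj <;>
    simp only [perfectEdge, Sym2.mem_iff] at hi hj <;> rcases hi with rfl | rfl <;>
    simp_all [Fin.ext_iff] <;> omega

def maximalEdge : Fin u ⊕ Fin a ⊕ Fin b → Sym2 (Vertex u t a b)
  | .inl i => s(clique ⟨2 * i, by omega⟩, clique ⟨2 * i + 1, by omega⟩)
  | .inr (.inl x) => s(tail x 1, tail x 2)
  | .inr (.inr y) => s(gadget y 0, gadget y 1)

theorem maximalEdge_mem_edgeSet (i) : maximalEdge (t := t) i ∈ (graph u t a b).edgeSet := by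
  rcases i with i | x | y <;> simp [maximalEdge, graph, rel, Fin.ext_iff]

theorem eq_of_mem_maximalEdge :
    ∀ i j, ∀ v ∈ maximalEdge (u := u) (t := t) (a := a) (b := b) i, v ∈ maximalEdge j →
      i = j := by
  rintro (i | x | y) (j | x' | y') v hi hj <;>
    simp only [maximalEdge, Sym2.mem_iff] at hi hj <;> rcases hi with rfl | rfl <;>
    simp_all [Fin.ext_iff] <;> omega

theorem exists_mem_maximalEdge_of_adj :
    ∀ v w, (graph u t a b).Adj v w → ∃ i, v ∈ maximalEdge i ∨ w ∈ maximalEdge i := by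
  have hclique (c : Fin (2 * u)) : ∃ i, clique c ∈ maximalEdge (t := t) (a := a) (b := b) i :=
    ⟨.inl ⟨c / 2, by omega⟩, by simp [maximalEdge, Fin.ext_iff]; omega⟩
  have hgadget (y : Fin b) (k : Fin 2) :
      (gadget y k : Vertex u t a b) ∈ maximalEdge (.inr (.inr y)) := by
    fin_cases k <;> simp [maximalEdge]
  rintro ((i | j) | (⟨x, k⟩ | ⟨y, k⟩)) ((i' | j') | (⟨x', k'⟩ | ⟨y', k'⟩)) hvw <;>
    simp [graph, rel] at hvw
  all_goals first
    | exact (hclique _).imp fun _ => Or.inl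
    | exact (hclique _).imp fun _ => Or.inr
    | exact ⟨_, Or.inl (hgadget y k)⟩
    | exact ⟨_, Or.inr (hgadget y' k')⟩
    | refine ⟨.inr (.inl x), ?_⟩
      simp [maximalEdge, Fin.ext_iff] at hvw ⊢
      omega

def inducedEdge (hu : 0 < u) (ht : 0 < t) : Unit ⊕ Fin a ⊕ Fin b → Sym2 (Vertex u t a b)
  | .inl _ => s(clique ⟨1, by omega⟩, whisker ⟨1, by omega⟩)
  | .inr (.inl x) => s(tail x 2, tail x 3)
  | .inr (.inr y) => s(gadget y 0, gadget y 1)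

theorem inducedEdge_mem_edgeSet (hu : 0 < u) (ht : 0 < t) (i) :
    inducedEdge hu ht i ∈ (graph u t a b).edgeSet := by
  rcases i with _ | x | y <;> simp [inducedEdge, graph, rel]

theorem eq_of_mem_inducedEdge (hu : 0 < u) (ht : 0 < t) :
    ∀ i j, ∀ v ∈ inducedEdge (a := a) (b := b) hu ht i, v ∈ inducedEdge hu ht j →
      i = j := by
  rintro (_ | x | y) (_ | x' | y') v hi hj <;>
    simp only [inducedEdge, Sym2.mem_iff] at hi hj <;> rcases hi with rfl | rfl <;>
    simp_all [Fin.ext_iff]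

theorem eq_of_adj_of_mem_inducedEdge (hu : 0 < u) (ht : 0 < t) :
    ∀ i j, ∀ v ∈ inducedEdge (a := a) (b := b) hu ht i, ∀ w ∈ inducedEdge hu ht j,
      (graph u t a b).Adj v w → i = j := by
  rintro (_ | x | y) (_ | x' | y') v hi w hj hvw <;>
    simp only [inducedEdge, Sym2.mem_iff] at hi hj <;> rcases hi with rfl | rfl <;>
    rcases hj with rfl | rfl <;> simp_all [graph, rel, Fin.ext_iff] <;> omega

def zone : Unit ⊕ Fin a ⊕ Fin b → Set (Vertex u t a b)
  | .inl _ => Set.range clique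
  | .inr (.inl x) => {tail x 1, tail x 2}
  | .inr (.inr y) => {gadget y 0}

theorem zone_isClique (i) : (graph u t a b).IsClique (zone i) := by
  rcases i with _ | x | y
  · rintro _ ⟨i, rfl⟩ _ ⟨j, rfl⟩ hij
    simpa [graph, rel] using hij
  · exact SimpleGraph.isClique_pair.mpr fun _ => by simp [graph, rel]
  · exact SimpleGraph.isClique_singleton _

theorem exists_mem_zone_of_adj :
    ∀ v w, (graph u t a b).Adj v w → ∃ i, v ∈ zone i ∨ w ∈ zone i := by
  have hgadget (y : Fin b) (k k' : Fin 2) (hk : k ≠ k') :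
      (gadget y k : Vertex u t a b) ∈ zone (.inr (.inr y)) ∨
        (gadget y k' : Vertex u t a b) ∈ zone (.inr (.inr y)) := by
    fin_cases k <;> fin_cases k' <;> simp_all [zone]
  rintro ((i | j) | (⟨x, k⟩ | ⟨y, k⟩)) ((i' | j') | (⟨x', k'⟩ | ⟨y', k'⟩)) hvw <;>
    simp [graph, rel] at hvw
  all_goals first
    | exact ⟨.inl (), Or.inl ⟨_, rfl⟩⟩
    | exact ⟨.inl (), Or.inr ⟨_, rfl⟩⟩
    | refine ⟨.inr (.inr y'), Or.inr ?_⟩; simp [zone, hvw.2]; done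
    | refine ⟨.inr (.inr y), Or.inl ?_⟩; simp [zone, hvw.2]; done
    | obtain ⟨hne, rfl | rfl⟩ := hvw <;> exact ⟨_, hgadget _ _ _ (hne rfl)⟩
    | refine ⟨.inr (.inl x), ?_⟩
      simp [zone, Fin.ext_iff] at hvw ⊢
      omega

def support : Fin a ⊕ Fin b → Vertex u t a b
  | .inl x => tail x 2
  | .inr y => gadget y 0

def leaf : Fin a ⊕ Fin b → Vertex u t a b
  | .inl x => tail x 3
  | .inr y => gadget y 1

theorem support_injective : Function.Injective (support : Fin a ⊕ Fin b → Vertex u t a b) := by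
  rintro (x | y) (x' | y') h <;> simp_all [support]

theorem support_adj_leaf (i : Fin a ⊕ Fin b) : (graph u t a b).Adj (support i) (leaf i) := by
  rcases i with x | y <;> simp [support, leaf, graph, rel]

theorem eq_support_of_leaf_adj (i : Fin a ⊕ Fin b) :
    ∀ v, (graph u t a b).Adj (leaf i) v → v = support i := by
  rcases i with x | y <;> rintro ((i | j) | (⟨x', k⟩ | ⟨y', k⟩)) hv <;>
    simp [support, leaf, graph, rel] at hv ⊢
  all_goals simp only [Fin.ext_iff] at hv ⊢; omega

theorem support_not_adj (i j : Fin a ⊕ Fin b) :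
    ¬ (graph u t a b).Adj (support i) (support j) := by
  rcases i with x | y <;> rcases j with x' | y' <;> simp [support, graph, rel, eq_comm]

theorem clique_ne_support_and_not_adj (c : Fin (2 * u)) (i : Fin a ⊕ Fin b) :
    clique c ≠ support (t := t) i ∧ ¬ (graph u t a b).Adj (clique c) (support i) := by
  rcases i with x | y <;> simp [support, graph, rel]

theorem add_add_le_ncard_of_isMaximalMatchingSet {M : Set (Sym2 (Vertex u t a b))}
    (hM : IsMaximalMatchingSet (graph u t a b) M) : u + a + b ≤ M.ncard := by
  classical
  let K : Finset (Vertex u t a b) := univ.image clique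
  let S : Finset (Vertex u t a b) := univ.image support
  have hK : (graph u t a b).IsClique (K : Set (Vertex u t a b)) := by
    simp only [K, coe_image, coe_univ, Set.image_univ]
    rintro _ ⟨i, rfl⟩ _ ⟨j, rfl⟩ hij
    simpa [graph, rel] using hij
  have hS : (graph u t a b).IsIndepSet (S : Set (Vertex u t a b)) := by
    simp only [S, coe_image, coe_univ, Set.image_univ]
    rintro _ ⟨i, rfl⟩ _ ⟨j, rfl⟩ _
    exact support_not_adj i j
  have hSM : ∀ v ∈ S, ∃ e ∈ M, v ∈ e := by
    simp only [S, mem_image, mem_univ, true_and]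
    rintro _ ⟨i, rfl⟩
    exact hM.exists_mem_of_pendant (support_adj_leaf i) (eq_support_of_leaf_adj i)
  have hKS : ∀ x ∈ K, ∀ y ∈ S, x ≠ y ∧ ¬ (graph u t a b).Adj x y := by
    simp only [K, S, mem_image, mem_univ, true_and]
    rintro _ ⟨c, rfl⟩ _ ⟨i, rfl⟩
    exact clique_ne_support_and_not_adj c i
  have := hM.card_add_two_mul_card_le hK hS hSM hKS
  rw [card_image_of_injective _ (fun _ _ h => Sum.inl_injective (Sum.inl_injective h)),
    card_image_of_injective _ support_injective] at this
  simp only [card_univ, Fintype.card_fin, Fintype.card_sum] at this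
  omega

theorem matchNum_graph (htu : t ≤ u) : matchNum (graph u t a b) = u + t + 2 * a + b := by
  have hcard : (Set.range (perfectEdge (a := a) (b := b) htu)).ncard = u + t + 2 * a + b := by
    rw [ncard_range_of_forall_mem_imp_eq (eq_of_mem_perfectEdge htu)]
    simp only [Nat.card_eq_fintype_card, Fintype.card_sum, Fintype.card_prod, Fintype.card_fin]
    omega
  rw [← hcard]
  refine matchNum_eq_ncard
    (isMatchingSet_range (perfectEdge_mem_edgeSet htu) (eq_of_mem_perfectEdge htu)) fun N hN => ?_
  have := hN.two_mul_ncard_le_card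
  rw [card_vertex] at this
  omega

theorem minMatchNum_graph : minMatchNum (graph u t a b) = u + a + b := by
  have hcard : (Set.range (maximalEdge (u := u) (t := t) (a := a) (b := b))).ncard = u + a + b := by
    rw [ncard_range_of_forall_mem_imp_eq eq_of_mem_maximalEdge]
    simp only [Nat.card_eq_fintype_card, Fintype.card_sum, Fintype.card_fin]
    omega
  rw [← hcard]
  exact minMatchNum_eq_ncard (isMaximalMatchingSet_range maximalEdge_mem_edgeSet
    eq_of_mem_maximalEdge exists_mem_maximalEdge_of_adj)
    fun N hN => hcard ▸ add_add_le_ncard_of_isMaximalMatchingSet hN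

theorem indMatchNum_graph (hu : 0 < u) (ht : 0 < t) : indMatchNum (graph u t a b) = 1 + a + b := by
  have hcard : (Set.range (inducedEdge (a := a) (b := b) hu ht)).ncard = 1 + a + b := by
    rw [ncard_range_of_forall_mem_imp_eq (eq_of_mem_inducedEdge hu ht)]
    simp only [Nat.card_eq_fintype_card, Fintype.card_sum, Fintype.card_unit, Fintype.card_fin]
    omega
  rw [← hcard]
  refine indMatchNum_eq_ncard (isInducedMatchingSet_range (inducedEdge_mem_edgeSet hu ht)
    (eq_of_mem_inducedEdge hu ht) (eq_of_adj_of_mem_inducedEdge hu ht)) fun N hN => ?_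
  have := hN.ncard_le_of_isClique_cover zone zone_isClique exists_mem_zone_of_adj
  simp only [Nat.card_eq_fintype_card, Fintype.card_sum, Fintype.card_unit,
    Fintype.card_fin] at this
  omega

end WhiskeredClique

open WhiskeredClique in
theorem stmt_1 (p q r : ℕ) (hp : 2 ≤ p) (hpq : p ≤ q) (hqr : q < r) (hr2q : r ≤ 2 * q) :
    (∀ (V : Type) [Fintype V] (G : SimpleGraph V), G.Connected →
      indMatchNum G = p → minMatchNum G = q → matchNum G = r →
      2 * r ≤ Fintype.card V) ∧
    (∃ G : SimpleGraph (Fin (2 * r)), G.Connected ∧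
      indMatchNum G = p ∧ minMatchNum G = q ∧ matchNum G = r) := by
  refine ⟨fun V _ G _ _ _ hr => ?_, ?_⟩
  · obtain ⟨M, hM, hcard⟩ := exists_isMatchingSet_ncard_eq_matchNum G
    exact hr ▸ hcard ▸ hM.two_mul_ncard_le_card
  -- Choose `u, t, a, b` with `1 + a + b = p`, `u + a + b = q` and `u + t + 2a + b = r`.
  set u := q - p + 1
  set t := min (r - q) u
  set b := min (p - 1) (2 * q - r)
  set a := p - 1 - b
  have hcard : Fintype.card (Vertex u t a b) = 2 * r := by
    rw [card_vertex]
    omega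
  let φ := SimpleGraph.Iso.map (Fintype.equivFinOfCardEq hcard) (graph u t a b)
  refine ⟨_, φ.connected_iff.mp (graph_connected (by omega) (by omega) (by omega)), ?_, ?_, ?_⟩
  · rw [← indMatchNum_congr φ, indMatchNum_graph (by omega) (by omega)]
    omega
  · rw [← minMatchNum_congr φ, minMatchNum_graph]
    omega
  · rw [← matchNum_congr φ, matchNum_graph (by omega)]
    omega
end

section
/- For every integer r ≥ 2: every finite connected simple graph G with ind-match(G) = min-match(G) = match(G) = r has at least 2r edges, and there exists a finite connected simple graph G with ind-match(G) = min-match(G) = match(G) = r and exactly 2r edges. (That is, the minimum number of edges of such graphs is 2r.) -/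
variable {V : Type*}

/-! Take an induced matching `M` with `r ≥ 2` edges. By connectivity each edge of `M` is met by
an edge outside `M`, and since `M` is induced no edge meets two edges of `M`; so at least `r`
edges lie outside `M`. Conversely, in the spider with `r` legs of length two the `r` outer edges
form an induced maximal matching while the `r` middle vertices meet all `2r` edges, which squeezes
all three parameters to `r`. -/

section Matchings

variable {G : SimpleGraph V}

theorem IsMatchingSet.ncard_le_of_forall_exists_mem {ι : Type*} [Finite ι] {M : Set (Sym2 V)}
    (hM : IsMatchingSet G M) (a : ι → V) (ha : ∀ e ∈ G.edgeSet, ∃ i, a i ∈ e) :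
    M.ncard ≤ Nat.card ι := by
  choose f hf using fun e : M => ha e (hM.1 e e.2)
  rw [← Nat.card_coe_set_eq]
  refine Nat.card_le_card_of_injective f fun e e' hee' => Subtype.ext ?_
  by_contra hne
  exact hM.2 e e.2 e' e'.2 hne _ (hf e) (hee' ▸ hf e')

theorem IsMaximalMatchingSet.exists_mem_inter {M : Set (Sym2 V)} (hM : IsMaximalMatchingSet G M)
    {e : Sym2 V} (he : e ∈ G.edgeSet) : ∃ f ∈ M, ∃ v, v ∈ e ∧ v ∈ f := by
  by_contra! hdisj
  have heM : e ∉ M := fun heM => hdisj e heM _ (Sym2.out_fst_mem e) (Sym2.out_fst_mem e)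
  refine hM.2 e he heM ⟨Set.forall_mem_insert.2 ⟨he, hM.1.1⟩, ?_⟩
  rintro f (rfl | hf) f' (rfl | hf') hne v hv hv'
  · exact hne rfl
  · exact hdisj f' hf' v hv hv'
  · exact hdisj f hf v hv' hv
  · exact hM.1.2 f hf f' hf' hne v hv hv'

/-- Each edge of `N` meets an edge of `M` by maximality, and no edge meets two edges of `N`. -/
theorem IsInducedMatchingSet.ncard_le_of_isMaximalMatchingSet {N M : Set (Sym2 V)}
    (hN : IsInducedMatchingSet G N) (hM : IsMaximalMatchingSet G M) (hMfin : M.Finite) :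
    N.ncard ≤ M.ncard := by
  have := hMfin.to_subtype
  choose f hfM v hv hvf using fun e : N => hM.exists_mem_inter (hN.1.1 e e.2)
  rw [← Nat.card_coe_set_eq, ← Nat.card_coe_set_eq]
  refine Nat.card_le_card_of_injective (fun e => ⟨f e, hfM e⟩) fun e e' hee' => Subtype.ext ?_
  by_contra hne
  have hff' : f e = f e' := congrArg Subtype.val hee'
  exact hN.2 e e.2 e' e'.2 hne (f e) (hM.1.1 _ (hfM e))
    ⟨⟨v e, hvf e, hv e⟩, ⟨v e', hff' ▸ hvf e', hv e'⟩⟩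

theorem IsMatchingSet.exists_edge_notMem_inter_of_connected {M : Set (Sym2 V)}
    (hM : IsMatchingSet G M) (hG : G.Connected) (hcard : 1 < M.ncard) {e : Sym2 V} (he : e ∈ M) :
    ∃ g ∈ G.edgeSet \ M, ∃ v, v ∈ g ∧ v ∈ e := by
  obtain ⟨f, hf, hfe⟩ := Set.exists_ne_of_one_lt_ncard hcard e
  obtain ⟨p⟩ := hG.preconnected e.out.1 f.out.1
  obtain ⟨⟨⟨x, y⟩, hxy⟩, -, hx, hy⟩ := p.exists_boundary_dart {v | v ∈ e} (Sym2.out_fst_mem e)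
    (hM.2 f hf e he hfe _ (Sym2.out_fst_mem f))
  refine ⟨s(x, y), ⟨hxy, fun hg => ?_⟩, x, Sym2.mem_mk_left x y, hx⟩
  obtain rfl | hne := eq_or_ne s(x, y) e
  · exact hy (Sym2.mem_mk_right x y)
  · exact hM.2 _ hg e he hne x (Sym2.mem_mk_left x y) hx

theorem IsInducedMatchingSet.two_mul_ncard_le_ncard_edgeSet [Finite V] {M : Set (Sym2 V)}
    (hM : IsInducedMatchingSet G M) (hG : G.Connected) (hcard : 1 < M.ncard) :
    2 * M.ncard ≤ G.edgeSet.ncard := by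
  choose g hg v hvg hv using fun e : M => hM.1.exists_edge_notMem_inter_of_connected hG hcard e.2
  have hle : M.ncard ≤ (G.edgeSet \ M).ncard := by
    rw [← Nat.card_coe_set_eq, ← Nat.card_coe_set_eq]
    refine Nat.card_le_card_of_injective (fun e => ⟨g e, hg e⟩) fun e e' hee' => Subtype.ext ?_
    by_contra hne
    have hgg' : g e = g e' := congrArg Subtype.val hee'
    exact hM.2 e e.2 e' e'.2 hne (g e) (hg e).1
      ⟨⟨v e, hvg e, hv e⟩, ⟨v e', hgg' ▸ hvg e', hv e'⟩⟩
  have := Set.ncard_sdiff_add_ncard_of_subset hM.1.1 (Set.toFinite G.edgeSet)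
  omega

theorem exists_isInducedMatchingSet_ncard_eq_indMatchNum [Finite V] (G : SimpleGraph V) :
    ∃ M, IsInducedMatchingSet G M ∧ M.ncard = indMatchNum G :=
  Nat.sSup_mem (s := {n | ∃ M, IsInducedMatchingSet G M ∧ M.ncard = n})
    ⟨0, ∅, ⟨⟨by simp, by simp⟩, by simp⟩, Set.ncard_empty _⟩
    ⟨G.edgeSet.ncard, fun _ ⟨M, hM, hn⟩ => hn ▸ Set.ncard_le_ncard hM.1.1⟩

end Matchings

theorem sSup_ncard_eq {α : Type*} {P : Set α → Prop} {M₀ : Set α} {n : ℕ} (h₀ : P M₀)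
    (hn : M₀.ncard = n) (hle : ∀ M, P M → M.ncard ≤ n) :
    sSup {k | ∃ M, P M ∧ M.ncard = k} = n :=
  IsGreatest.csSup_eq ⟨⟨M₀, h₀, hn⟩, fun _ ⟨M, hM, hk⟩ => hk ▸ hle M hM⟩

theorem sInf_ncard_eq {α : Type*} {P : Set α → Prop} {M₀ : Set α} {n : ℕ} (h₀ : P M₀)
    (hn : M₀.ncard = n) (hle : ∀ M, P M → n ≤ M.ncard) :
    sInf {k | ∃ M, P M ∧ M.ncard = k} = n :=
  IsLeast.csInf_eq ⟨⟨M₀, h₀, hn⟩, fun _ ⟨M, hM, hk⟩ => hk ▸ hle M hM⟩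

namespace Spider

def mid (r : ℕ) (i : Fin r) : Fin (2 * r + 1) := ⟨i + 1, by omega⟩

def tip (r : ℕ) (i : Fin r) : Fin (2 * r + 1) := ⟨i + 1 + r, by omega⟩

def spoke (r : ℕ) (i : Fin r) : Sym2 (Fin (2 * r + 1)) := s(0, mid r i)

def outer (r : ℕ) (i : Fin r) : Sym2 (Fin (2 * r + 1)) := s(mid r i, tip r i)

end Spider

open Spider

/-- The spider with `r` legs `0 — mid r i — tip r i` of length two. -/
def spider (r : ℕ) : SimpleGraph (Fin (2 * r + 1)) :=
  SimpleGraph.fromEdgeSet (Set.range (spoke r) ∪ Set.range (outer r))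

section Spider

variable {r : ℕ}

theorem spider_edgeSet (r : ℕ) :
    (spider r).edgeSet = Set.range (spoke r) ∪ Set.range (outer r) := by
  rw [spider, SimpleGraph.edgeSet_fromEdgeSet, sdiff_eq_left, Set.disjoint_left]
  rintro _ (⟨i, rfl⟩ | ⟨i, rfl⟩) <;>
    simp [spoke, outer, mid, tip, Sym2.mk_isDiag_iff, Fin.ext_iff, i.pos.ne']

theorem spider_adj_mid (i : Fin r) : (spider r).Adj 0 (mid r i) := by
  rw [← SimpleGraph.mem_edgeSet, spider_edgeSet]
  exact .inl ⟨i, rfl⟩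

theorem spider_adj_tip (i : Fin r) : (spider r).Adj (mid r i) (tip r i) := by
  rw [← SimpleGraph.mem_edgeSet, spider_edgeSet]
  exact .inr ⟨i, rfl⟩

theorem spider_connected (r : ℕ) : (spider r).Connected := by
  suffices h : ∀ v, (spider r).Reachable 0 v from
    SimpleGraph.Connected.mk fun u v => (h u).symm.trans (h v)
  rintro ⟨v, hv⟩
  rcases Nat.lt_or_ge r v with hrv | hvr
  · rw [show (⟨v, hv⟩ : Fin (2 * r + 1)) = tip r ⟨v - 1 - r, by omega⟩ from
      Fin.ext (by simp [tip]; omega)]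
    exact (spider_adj_mid _).reachable.trans (spider_adj_tip _).reachable
  · rcases Nat.eq_zero_or_pos v with rfl | hv0
    · rfl
    · rw [show (⟨v, hv⟩ : Fin (2 * r + 1)) = mid r ⟨v - 1, by omega⟩ from
        Fin.ext (by simp [mid]; omega)]
      exact (spider_adj_mid _).reachable

theorem exists_mid_mem_of_mem_edgeSet_spider {e : Sym2 (Fin (2 * r + 1))}
    (he : e ∈ (spider r).edgeSet) : ∃ i, mid r i ∈ e := by
  rw [spider_edgeSet] at he
  rcases he with ⟨i, rfl⟩ | ⟨i, rfl⟩ <;> exact ⟨i, by simp [spoke, outer]⟩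

theorem ncard_range_outer (r : ℕ) : (Set.range (outer r)).ncard = r := by
  rw [Set.ncard_range_of_injective, Nat.card_eq_fintype_card, Fintype.card_fin]
  intro i j h
  simp only [outer, mid, tip, Sym2.eq_iff, Fin.ext_iff] at h
  omega

theorem isInducedMatchingSet_range_outer (r : ℕ) :
    IsInducedMatchingSet (spider r) (Set.range (outer r)) := by
  refine ⟨⟨fun e he => spider_edgeSet r ▸ Or.inr he, ?_⟩, ?_⟩
  · rintro _ ⟨i, rfl⟩ _ ⟨j, rfl⟩ hne v hvi hvj
    have hij : i.val ≠ j.val := fun h => hne (by rw [Fin.ext h])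
    simp only [outer, mid, tip, Sym2.mem_iff, Fin.ext_iff] at hvi hvj
    omega
  · rintro _ ⟨i, rfl⟩ _ ⟨j, rfl⟩ hne g hg ⟨⟨v, hvg, hvi⟩, ⟨w, hwg, hwj⟩⟩
    have hij : i.val ≠ j.val := fun h => hne (by rw [Fin.ext h])
    rw [spider_edgeSet] at hg
    rcases hg with ⟨k, rfl⟩ | ⟨k, rfl⟩ <;>
      simp only [spoke, outer, mid, tip, Sym2.mem_iff, Fin.ext_iff, Fin.val_zero]
        at hvg hwg hvi hwj <;>
      omega

theorem isMaximalMatchingSet_range_outer (r : ℕ) :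
    IsMaximalMatchingSet (spider r) (Set.range (outer r)) := by
  refine ⟨(isInducedMatchingSet_range_outer r).1, fun e he heM hins => ?_⟩
  rw [spider_edgeSet] at he
  obtain ⟨i, rfl⟩ := he.resolve_right heM
  refine hins.2 _ (Set.mem_insert _ _) _ (Set.mem_insert_of_mem _ ⟨i, rfl⟩) ?_ (mid r i)
    (by simp [spoke]) (by simp [outer])
  simp [spoke, outer, mid, tip, Fin.ext_iff]
  omega

theorem ncard_edgeSet_spider (r : ℕ) : (spider r).edgeSet.ncard = 2 * r := by
  have hdisj : Disjoint (Set.range (spoke r)) (Set.range (outer r)) := by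
    rw [Set.disjoint_left]
    rintro _ ⟨i, rfl⟩ ⟨j, h⟩
    simp only [spoke, outer, mid, tip, Sym2.eq_iff, Fin.ext_iff, Fin.val_zero] at h
    omega
  have hspoke : Function.Injective (spoke r) := by
    intro i j h
    simp only [spoke, mid, Sym2.eq_iff, Fin.ext_iff, Fin.val_zero] at h
    omega
  rw [spider_edgeSet, Set.ncard_union_eq hdisj, Set.ncard_range_of_injective hspoke,
    ncard_range_outer, Nat.card_eq_fintype_card, Fintype.card_fin]
  omega

theorem ncard_le_of_isMatchingSet_spider {M : Set (Sym2 (Fin (2 * r + 1)))}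
    (hM : IsMatchingSet (spider r) M) : M.ncard ≤ r := by
  simpa using hM.ncard_le_of_forall_exists_mem (mid r) fun _ => exists_mid_mem_of_mem_edgeSet_spider

theorem matchNum_spider (r : ℕ) : matchNum (spider r) = r :=
  sSup_ncard_eq (isInducedMatchingSet_range_outer r).1 (ncard_range_outer r)
    fun _ => ncard_le_of_isMatchingSet_spider

theorem indMatchNum_spider (r : ℕ) : indMatchNum (spider r) = r :=
  sSup_ncard_eq (isInducedMatchingSet_range_outer r) (ncard_range_outer r)
    fun _ hM => ncard_le_of_isMatchingSet_spider hM.1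

theorem minMatchNum_spider (r : ℕ) : minMatchNum (spider r) = r :=
  sInf_ncard_eq (isMaximalMatchingSet_range_outer r) (ncard_range_outer r) fun M hM =>
    (ncard_range_outer r).ge.trans
      ((isInducedMatchingSet_range_outer r).ncard_le_of_isMaximalMatchingSet hM M.toFinite)

end Spider

theorem stmt_9 (r : ℕ) (hr : 2 ≤ r) :
    (∀ (V : Type) [Fintype V] (G : SimpleGraph V), G.Connected →
      indMatchNum G = r → minMatchNum G = r → matchNum G = r →
      2 * r ≤ G.edgeSet.ncard) ∧
    (∃ (n : ℕ) (G : SimpleGraph (Fin n)), G.Connected ∧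
      indMatchNum G = r ∧ minMatchNum G = r ∧ matchNum G = r ∧
      G.edgeSet.ncard = 2 * r) := by
  refine ⟨fun V _ G hG hind _ _ => ?_, ⟨2 * r + 1, spider r, spider_connected r,
    indMatchNum_spider r, minMatchNum_spider r, matchNum_spider r, ncard_edgeSet_spider r⟩⟩
  obtain ⟨M, hM, hMcard⟩ := exists_isInducedMatchingSet_ncard_eq_indMatchNum G
  rw [← hind, ← hMcard]
  exact hM.two_mul_ncard_le_ncard_edgeSet hG (by omega)
end
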